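/- Improved per-node bound for the distributed Gaussian mean estimation example: Let Z_{i,k}, for i = 1, ..., n (n ≥ 2) and k = 1, ..., K, be i.i.d. d-dimensional Gaussian random vectors with distribution N(μ, σ²I_d) for σ > 0, let the loss be ℓ(w, z) = ‖w − z‖₂², let each node output its local sample mean W_k = (1/n) Σ_{i=1}^n Z_{i,k}, and let the aggregate model be Ŵ = (1/K) Σ_{k=1}^K W_k. Then the expected generalization error satisfies E[Δ_A(S)] ≤ (σ²d/K)·√(2(1 + 1/n)²·log(n/(n−1))). -/

import Mathlib

/-!
Since `Ŵ` is the mean of all `N = nK` samples and both risks split over the `d` coordinates,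
the integrand is a sum of one-dimensional generalization gaps of a sample mean. For i.i.d.
samples `X_l` with mean `m` and variance `v`, the bias-variance decomposition gives
`∫ (x̄ - z)² dν(z) = (x̄ - m)² + v` and `N⁻¹ ∑ (x̄ - X_l)² = N⁻¹ ∑ (m - X_l)² - (m - x̄)²`,
so the gap equals `2 (m - x̄)² + v - N⁻¹ ∑ (m - X_l)²`, whose expectation is
`2 Var[x̄] = 2v/N` by independence. Hence `E[Δ] = 2σ²d/(nK)`, and the theorem reduces to
`2/n ≤ √(2 (1 + 1/n)² log(n/(n-1)))`, which follows from `log(n/(n-1)) ≥ 1/n`.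
-/

open MeasureTheory ProbabilityTheory
open scoped ENNReal NNReal

lemma integral_const_sub_sq {Ω : Type*} [MeasurableSpace Ω] {P : Measure Ω}
    [IsProbabilityMeasure P] {X : Ω → ℝ} (hX : MemLp X 2 P) (c : ℝ) :
    ∫ ω, (c - X ω) ^ 2 ∂P = (c - P[X]) ^ 2 + Var[X; P] := by
  have hY : MemLp (fun ω => c - X ω) 2 P := (memLp_const c).sub hX
  have hmean : ∫ ω, (c - X ω) ∂P = c - P[X] := by
    rw [integral_sub (integrable_const c) (hX.integrable one_le_two), integral_const]
    simp
  rw [← variance_const_sub hX.aestronglyMeasurable c, variance_eq_sub hY, hmean]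
  simp [Pi.pow_apply]

lemma integral_sum_comp_eval {ι : Type*} [Fintype ι] {X : ι → Type*}
    [∀ i, MeasurableSpace (X i)] {μ : ∀ i, Measure (X i)} [∀ i, IsProbabilityMeasure (μ i)]
    {f : ∀ i, X i → ℝ} (hf : ∀ i, Integrable (f i) (μ i)) :
    ∫ x, ∑ i, f i (x i) ∂Measure.pi μ = ∑ i, ∫ y, f i y ∂μ i := by
  rw [integral_finsetSum _ fun i _ => integrable_comp_eval (hf i)]
  exact Finset.sum_congr rfl fun i _ => integral_comp_eval (hf i).aestronglyMeasurable

lemma iIndepFun_uncurry_pi' {κ ι Ω 𝓧 : Type*} [Fintype κ] [Fintype ι] [MeasurableSpace Ω]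
    [MeasurableSpace 𝓧] (μ : κ → ι → Measure Ω) [∀ k i, IsProbabilityMeasure (μ k i)]
    {X : κ → ι → Ω → 𝓧} (hX : ∀ k i, Measurable (X k i)) :
    iIndepFun (fun (p : κ × ι) (ω : κ → ι → Ω) => X p.1 p.2 (ω p.1 p.2))
      (Measure.pi fun k => Measure.pi (μ k)) := by
  simpa only [Measure.infinitePi_eq_pi] using
    iIndepFun_uncurry_infinitePi' (Ω := fun _ _ => Ω) μ hX

lemma hasLaw_eval_eval_eval_pi {κ ι δ : Type*} [Fintype κ] [Fintype ι] [Fintype δ]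
    {𝓧 : δ → Type*} [∀ j, MeasurableSpace (𝓧 j)] {μ : ∀ j, Measure (𝓧 j)}
    [∀ j, IsProbabilityMeasure (μ j)] (k : κ) (i : ι) (j : δ) :
    HasLaw (fun s : κ → ι → ∀ j, 𝓧 j => s k i j) (μ j)
      (Measure.pi fun _ : κ => Measure.pi fun _ : ι => Measure.pi μ) :=
  ((measurePreserving_eval μ j).comp ((measurePreserving_eval (fun _ : ι => _) i).comp
    (measurePreserving_eval (fun _ : κ => _) k))).hasLaw

lemma ProbabilityTheory.HasLaw.memLp {Ω E : Type*} [MeasurableSpace Ω] [MeasurableSpace E]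
    [NormedAddCommGroup E] {P : Measure Ω} {ν : Measure E} {Y : Ω → E} {p : ℝ≥0∞}
    (hY : HasLaw Y ν P) (hν : MemLp id p ν) : MemLp Y p P :=
  (hY.map_eq ▸ hν).comp_of_map hY.aemeasurable

noncomputable section

variable {ι : Type*} [Fintype ι]

def sampleMean (x : ι → ℝ) : ℝ := (Fintype.card ι : ℝ)⁻¹ * ∑ l, x l

/-- The paper's `Δ_A(S)` for the one-dimensional sample-mean learner and data distribution `ν`. -/
def generalizationGap (ν : Measure ℝ) (x : ι → ℝ) : ℝ :=
  ∫ z, (sampleMean x - z) ^ 2 ∂ν - (Fintype.card ι : ℝ)⁻¹ * ∑ l, (sampleMean x - x l) ^ 2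

lemma mean_sq_sampleMean_sub [Nonempty ι] (x : ι → ℝ) (c : ℝ) :
    (Fintype.card ι : ℝ)⁻¹ * ∑ l, (sampleMean x - x l) ^ 2
      = (Fintype.card ι : ℝ)⁻¹ * ∑ l, (c - x l) ^ 2 - (c - sampleMean x) ^ 2 := by
  have hN : (Fintype.card ι : ℝ) ≠ 0 := by positivity
  have hsum : ∑ l, x l = Fintype.card ι * sampleMean x := by
    rw [sampleMean]
    field_simp
  have hsq : ∀ l, (sampleMean x - x l) ^ 2
      = (c - x l) ^ 2 - 2 * (c - sampleMean x) * (c - x l) + (c - sampleMean x) ^ 2 :=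
    fun l => by ring
  simp only [hsq, Finset.sum_add_distrib, Finset.sum_sub_distrib, ← Finset.mul_sum,
    Finset.sum_const, Finset.card_univ, nsmul_eq_mul, hsum]
  field_simp
  ring

lemma generalizationGap_eq [Nonempty ι] {ν : Measure ℝ} [IsProbabilityMeasure ν]
    (hν : MemLp id 2 ν) (x : ι → ℝ) :
    generalizationGap ν x = 2 * (∫ z, z ∂ν - sampleMean x) ^ 2 + Var[id; ν]
      - (Fintype.card ι : ℝ)⁻¹ * ∑ l, (∫ z, z ∂ν - x l) ^ 2 := by
  have hrisk := integral_const_sub_sq hν (sampleMean x)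
  simp only [id] at hrisk
  rw [generalizationGap, hrisk, mean_sq_sampleMean_sub x (∫ z, z ∂ν)]
  ring

variable {Ω : Type*} [MeasurableSpace Ω] {P : Measure Ω} {X : ι → Ω → ℝ}

lemma memLp_sampleMean (hX : ∀ l, MemLp (X l) 2 P) :
    MemLp (fun ω => sampleMean (X · ω)) 2 P :=
  (memLp_finsetSum _ fun l _ => hX l).const_mul _

lemma integral_sampleMean (hX : ∀ l, Integrable (X l) P) :
    ∫ ω, sampleMean (X · ω) ∂P = sampleMean fun l => P[X l] := by
  simp only [sampleMean]
  rw [integral_const_mul, integral_finsetSum _ fun l _ => hX l]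

lemma variance_sampleMean (hX : ∀ l, MemLp (X l) 2 P) (hind : iIndepFun X P) :
    Var[fun ω => sampleMean (X · ω); P]
      = (Fintype.card ι : ℝ)⁻¹ ^ 2 * ∑ l, Var[X l; P] := by
  simp only [sampleMean]
  rw [variance_const_mul, ← Finset.sum_fn, IndepFun.variance_sum (fun l _ => hX l)
    fun i _ j _ hij => hind.indepFun hij]

variable [IsProbabilityMeasure P] [Nonempty ι] {ν : Measure ℝ} [IsProbabilityMeasure ν]

lemma integrable_generalizationGap (hX : ∀ l, HasLaw (X l) ν P) (hν : MemLp id 2 ν) :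
    Integrable (fun ω => generalizationGap ν (X · ω)) P := by
  have hL2 l := (hX l).memLp hν
  simp only [generalizationGap_eq hν]
  exact ((((memLp_const _).sub (memLp_sampleMean hL2)).integrable_sq.const_mul 2).add
    (integrable_const _)).sub ((integrable_finsetSum _ fun l _ =>
      ((memLp_const _).sub (hL2 l)).integrable_sq).const_mul _)

theorem integral_generalizationGap (hX : ∀ l, HasLaw (X l) ν P) (hν : MemLp id 2 ν)
    (hind : iIndepFun X P) :
    ∫ ω, generalizationGap ν (X · ω) ∂P = 2 * Var[id; ν] / Fintype.card ι := by
  have hL2 l := (hX l).memLp hν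
  have hmean l : P[X l] = ∫ z, z ∂ν := (hX l).integral_eq
  have hvar l : Var[X l; P] = Var[id; ν] := (hX l).variance_eq
  have hmean_bar : ∫ ω, sampleMean (X · ω) ∂P = ∫ z, z ∂ν := by
    rw [integral_sampleMean fun l => (hL2 l).integrable one_le_two]
    simp only [hmean, sampleMean, Finset.sum_const, Finset.card_univ, nsmul_eq_mul]
    field_simp
  have hbar_sq : Integrable (fun ω => (∫ z, z ∂ν - sampleMean (X · ω)) ^ 2) P :=
    ((memLp_const _).sub (memLp_sampleMean hL2)).integrable_sq
  have hdev_sq l : Integrable (fun ω => (∫ z, z ∂ν - X l ω) ^ 2) P :=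
    ((memLp_const _).sub (hL2 l)).integrable_sq
  have hdev_mean : Integrable
      (fun ω => (Fintype.card ι : ℝ)⁻¹ * ∑ l, (∫ z, z ∂ν - X l ω) ^ 2) P :=
    (integrable_finsetSum _ fun l _ => hdev_sq l).const_mul _
  simp only [generalizationGap_eq hν]
  rw [integral_sub ((hbar_sq.const_mul 2).fun_add (integrable_const _)) hdev_mean,
    integral_add (hbar_sq.const_mul 2) (integrable_const _), integral_const_mul,
    integral_const_mul, integral_finsetSum _ fun l _ => hdev_sq l,
    integral_const_sub_sq (memLp_sampleMean hL2), hmean_bar, variance_sampleMean hL2 hind]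
  simp only [integral_const_sub_sq (hL2 _), hmean, hvar, sub_self, Finset.sum_const,
    Finset.card_univ, nsmul_eq_mul, integral_const, probReal_univ, one_smul]
  field_simp
  ring

end

lemma risk_sub_empiricalRisk_eq_sum_generalizationGap {d n K : ℕ} (γ : Fin d → Measure ℝ)
    [∀ j, IsProbabilityMeasure (γ j)] (hγ : ∀ j, MemLp id 2 (γ j))
    (s : Fin K → Fin n → Fin d → ℝ) :
    (∫ z, ∑ j : Fin d,
          (((K : ℝ)⁻¹ • ∑ k : Fin K, (n : ℝ)⁻¹ • ∑ i : Fin n, s k i) j - z j) ^ 2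
        ∂Measure.pi γ)
      - (1 / (n * K) : ℝ) * ∑ k : Fin K, ∑ i : Fin n, ∑ j : Fin d,
          (((K : ℝ)⁻¹ • ∑ k' : Fin K, (n : ℝ)⁻¹ • ∑ i' : Fin n, s k' i') j - s k i j) ^ 2
      = ∑ j, generalizationGap (γ j) (fun p : Fin K × Fin n => s p.1 p.2 j) := by
  have hW j : ((K : ℝ)⁻¹ • ∑ k : Fin K, (n : ℝ)⁻¹ • ∑ i : Fin n, s k i) j
      = sampleMean (fun p : Fin K × Fin n => s p.1 p.2 j) := by
    simp only [sampleMean, Finset.sum_apply, Pi.smul_apply, smul_eq_mul, Fintype.card_prod,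
      Fintype.card_fin, Fintype.sum_prod_type, Finset.mul_sum, Nat.cast_mul, mul_inv]
    ring_nf
  simp_rw [hW]
  rw [integral_sum_comp_eval
      (f := fun j t => (sampleMean (fun p : Fin K × Fin n => s p.1 p.2 j) - t) ^ 2)
      fun j => ((memLp_const _).sub (hγ j)).integrable_sq]
  simp only [generalizationGap, Finset.sum_sub_distrib, Fintype.card_prod, Fintype.card_fin]
  congr 1
  rw [← Finset.mul_sum, Finset.sum_comm (s := (Finset.univ : Finset (Fin d))),
    Fintype.sum_prod_type, Nat.cast_mul, mul_comm (K : ℝ), one_div]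

lemma two_div_le_sqrt_log {x : ℝ} (hx : 1 < x) :
    2 / x ≤ Real.sqrt (2 * (1 + 1 / x) ^ 2 * Real.log (x / (x - 1))) := by
  have hx0 : 0 < x := by linarith
  have hlog : 1 / x ≤ Real.log (x / (x - 1)) := by
    have h := Real.one_sub_inv_le_log_of_pos (div_pos hx0 (sub_pos.mpr hx))
    rwa [inv_div, one_sub_div hx0.ne', sub_sub_cancel] at h
  rw [Real.le_sqrt' (by positivity)]
  calc (2 / x) ^ 2 ≤ 2 * (1 + 1 / x) ^ 2 * (1 / x) := by
        rw [div_pow, div_le_iff₀ (by positivity)]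
        field_simp
        nlinarith
    _ ≤ _ := by gcongr

theorem gaussian_mean_estimation_per_node_bound_general
    (d n K : ℕ) (hn : 2 ≤ n) (hK : 0 < K)
    (μ0 : Fin d → ℝ) (σ : ℝ≥0) :
    ∫ s : Fin K → Fin n → Fin d → ℝ,
        ((∫ z, ∑ j : Fin d,
              (((K : ℝ)⁻¹ • ∑ k : Fin K, (n : ℝ)⁻¹ • ∑ i : Fin n, s k i) j - z j) ^ 2
            ∂(Measure.pi fun j : Fin d => gaussianReal (μ0 j) (σ ^ 2)))
          - (1 / (n * K) : ℝ) * ∑ k : Fin K, ∑ i : Fin n, ∑ j : Fin d,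
              (((K : ℝ)⁻¹ • ∑ k' : Fin K, (n : ℝ)⁻¹ • ∑ i' : Fin n, s k' i') j
                - s k i j) ^ 2)
        ∂(Measure.pi fun _ : Fin K => (Measure.pi fun _ : Fin n =>
          (Measure.pi fun j : Fin d => gaussianReal (μ0 j) (σ ^ 2))))
      ≤ ((σ : ℝ) ^ 2 * d / K) *
        Real.sqrt (2 * (1 + 1 / (n : ℝ)) ^ 2 * Real.log ((n : ℝ) / ((n : ℝ) - 1))) := by
  set γ : Fin d → Measure ℝ := fun j => gaussianReal (μ0 j) (σ ^ 2)
  set P := Measure.pi fun _ : Fin K => Measure.pi fun _ : Fin n => Measure.pi γ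
  have : Nonempty (Fin K × Fin n) := ⟨(⟨0, hK⟩, ⟨0, by omega⟩)⟩
  have hγ j : MemLp id 2 (γ j) := memLp_id_gaussianReal 2
  have hvar j : Var[id; γ j] = (σ ^ 2 : ℝ≥0) := variance_id_gaussianReal
  have hlaw j (p : Fin K × Fin n) : HasLaw (fun s : Fin K → Fin n → Fin d → ℝ => s p.1 p.2 j)
      (γ j) P := hasLaw_eval_eval_eval_pi p.1 p.2 j
  have hind j : iIndepFun (fun (p : Fin K × Fin n) (s : Fin K → Fin n → Fin d → ℝ) =>
      s p.1 p.2 j) P :=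
    iIndepFun_uncurry_pi' (X := fun _ _ (z : Fin d → ℝ) => z j) _ fun _ _ => measurable_pi_apply j
  calc _ = ∑ j, ∫ s, generalizationGap (γ j) (fun p : Fin K × Fin n => s p.1 p.2 j) ∂P := by
        simp_rw [risk_sub_empiricalRisk_eq_sum_generalizationGap γ hγ]
        exact integral_finsetSum _ fun j _ => integrable_generalizationGap (hlaw j) (hγ j)
    _ = ((σ : ℝ) ^ 2 * d / K) * (2 / n) := by
        simp only [integral_generalizationGap (hlaw _) (hγ _) (hind _), hvar, Finset.sum_const,
          Finset.card_univ, Fintype.card_prod, Fintype.card_fin, nsmul_eq_mul]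
        push_cast
        field_simp
    _ ≤ _ := by
        gcongr
        exact two_div_le_sqrt_log (by exact_mod_cast hn)

/-- **Improved per-node bound for distributed Gaussian mean estimation.**
For `Z_{i,k}`, `i = 1, …, n` (`n ≥ 2`), `k = 1, …, K`, i.i.d. `N(μ, σ²I_d)` on `ℝ^d`,
squared `ℓ²` loss `ℓ(w, z) = ‖w − z‖₂² = ∑_j (w_j − z_j)²`, local sample means
`W_k = (1/n) ∑_i Z_{i,k}` and aggregate model `Ŵ = (1/K) ∑_k W_k`, the expected
generalization error satisfies `E[Δ_A(S)] ≤ (σ²d/K)·√(2(1 + 1/n)²·log(n/(n−1)))`. -/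
theorem gaussian_mean_estimation_per_node_bound
    (d n K : ℕ) (hn : 2 ≤ n) (hK : 0 < K)
    (μ0 : Fin d → ℝ) (σ : ℝ≥0) (hσ : 0 < σ) :
    ∫ s : Fin K → Fin n → Fin d → ℝ,
        ((∫ z, ∑ j : Fin d,
              (((K : ℝ)⁻¹ • ∑ k : Fin K, (n : ℝ)⁻¹ • ∑ i : Fin n, s k i) j - z j) ^ 2
            ∂(Measure.pi fun j : Fin d => gaussianReal (μ0 j) (σ ^ 2)))
          - (1 / (n * K) : ℝ) * ∑ k : Fin K, ∑ i : Fin n, ∑ j : Fin d,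
              (((K : ℝ)⁻¹ • ∑ k' : Fin K, (n : ℝ)⁻¹ • ∑ i' : Fin n, s k' i') j
                - s k i j) ^ 2)
        ∂(Measure.pi fun _ : Fin K => (Measure.pi fun _ : Fin n =>
          (Measure.pi fun j : Fin d => gaussianReal (μ0 j) (σ ^ 2))))
      ≤ ((σ : ℝ) ^ 2 * d / K) *
        Real.sqrt (2 * (1 + 1 / (n : ℝ)) ^ 2 * Real.log ((n : ℝ) / ((n : ℝ) - 1))) :=
  gaussian_mean_estimation_per_node_bound_general d n K hn hK μ0 σ
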